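/- Let S be a real symmetric positive definite n×n matrix with eigenvalues λ_1,…,λ_n (listed with multiplicity) ranked in increasing ℓ-order, i.e. ℓ(λ_1) ≤ ⋯ ≤ ℓ(λ_n). Then for every 1 ≤ k ≤ n and every orthonormal family d_1,…,d_k in ℝ^n, Σ_{i=1}^k ℓ(d_iᵀ S d_i) ≥ Σ_{i=1}^k ℓ(λ_i). -/

import Mathlib

open Matrix

noncomputable def ell (x : ℝ) : ℝ := Real.log x - x + 1

/-!
Expanding `d i` in the eigenbasis gives `d iᵀ S d i = ∑ j, c i j * λ j` with
`c i j = (e j ⬝ᵥ d i) ^ 2`; the rows of `c` sum to `1` (Parseval) and its columns to at most `1`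
(Bessel). By concavity of `ℓ` (Jensen), `∑ i, ℓ (d iᵀ S d i) ≥ ∑ j, t j * ℓ (λ j)` where the
column sums `t j ∈ [0, 1]` add up to `k`. Since `ℓ (λ j)` increases with `j`, such a weighted
sum is smallest when all the weight sits on the first `k` indices.
-/

open Finset

lemma ell_concaveOn : ConcaveOn ℝ (Set.Ioi 0) ell :=
  (strictConcaveOn_log_Ioi.concaveOn.sub (convexOn_id (convex_Ioi 0))).add_const 1

section Orthonormal

variable {ι κ : Type*} [Fintype ι]

lemma sum_dotProduct_smul_of_orthonormal [DecidableEq ι] {e : ι → ι → ℝ}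
    (he : ∀ i j, e i ⬝ᵥ e j = if i = j then (1 : ℝ) else 0) (x : ι → ℝ) :
    ∑ j, (e j ⬝ᵥ x) • e j = x := by
  have hEEt : of e * (of e)ᵀ = 1 := by
    ext i j
    rw [mul_apply', one_apply]
    exact he i j
  calc ∑ j, (e j ⬝ᵥ x) • e j = (of e)ᵀ *ᵥ (of e *ᵥ x) := by
        rw [mulVec_transpose, vecMul_eq_sum]; rfl
    _ = x := by rw [mulVec_mulVec, mul_eq_one_comm.mp hEEt, one_mulVec]

lemma dotProduct_mulVec_eq_sum_of_eigenbasis [DecidableEq ι] {S : Matrix ι ι ℝ}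
    {lam : ι → ℝ} {e : ι → ι → ℝ} (heig : ∀ j, S *ᵥ e j = lam j • e j)
    (he : ∀ i j, e i ⬝ᵥ e j = if i = j then (1 : ℝ) else 0) (x : ι → ℝ) :
    x ⬝ᵥ S *ᵥ x = ∑ j, (e j ⬝ᵥ x) ^ 2 * lam j := by
  conv_lhs => arg 2; rw [← sum_dotProduct_smul_of_orthonormal he x]
  simp only [mulVec_sum, mulVec_smul, heig, dotProduct_sum, dotProduct_smul, smul_eq_mul]
  refine sum_congr rfl fun j _ => ?_
  rw [dotProduct_comm]
  ring

lemma dotProduct_self_eq_sum_sq_of_orthonormal [DecidableEq ι] {e : ι → ι → ℝ}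
    (he : ∀ i j, e i ⬝ᵥ e j = if i = j then (1 : ℝ) else 0) (x : ι → ℝ) :
    x ⬝ᵥ x = ∑ j, (e j ⬝ᵥ x) ^ 2 := by
  simpa using dotProduct_mulVec_eq_sum_of_eigenbasis (S := 1) (lam := 1)
    (fun j => by simp) he x

lemma sum_sq_dotProduct_le_of_orthonormal [Fintype κ] [DecidableEq κ] {d : κ → ι → ℝ}
    (hd : ∀ i j, d i ⬝ᵥ d j = if i = j then (1 : ℝ) else 0) (y : ι → ℝ) :
    ∑ i, (d i ⬝ᵥ y) ^ 2 ≤ y ⬝ᵥ y := by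
  have hv : Orthonormal ℝ fun i => (WithLp.toLp 2 (d i) : EuclideanSpace ℝ ι) := by
    rw [orthonormal_iff_ite]
    intro i j
    simp [EuclideanSpace.inner_toLp_toLp, dotProduct_comm, hd]
  have := hv.sum_inner_products_le (WithLp.toLp 2 y : EuclideanSpace ℝ ι) (s := univ)
  rw [← real_inner_self_eq_norm_sq] at this
  simpa only [EuclideanSpace.inner_toLp_toLp, star_trivial, Real.norm_eq_abs, sq_abs,
    dotProduct_comm y] using this

end Orthonormal

lemma Matrix.PosDef.pos_of_mulVec_eq_smul {ι : Type*} [Fintype ι] {S : Matrix ι ι ℝ}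
    (hS : S.PosDef) {v : ι → ℝ} (hv : v ≠ 0) {μ : ℝ} (hμ : S *ᵥ v = μ • v) : 0 < μ := by
  have := hS.dotProduct_mulVec_pos hv
  rw [hμ, dotProduct_smul, star_trivial, smul_eq_mul] at this
  exact pos_of_mul_pos_left this (dotProduct_self_star_nonneg v)

lemma sum_le_sum_mul_of_threshold {ι : Type*} [Fintype ι] [DecidableEq ι] (s : Finset ι)
    {a t : ι → ℝ} (c : ℝ) (ht0 : ∀ j, 0 ≤ t j) (ht1 : ∀ j, t j ≤ 1) (hsum : ∑ j, t j = #s)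
    (hlow : ∀ j ∈ s, a j ≤ c) (hhigh : ∀ j ∉ s, c ≤ a j) :
    ∑ j ∈ s, a j ≤ ∑ j, t j * a j := by
  have hterm : ∀ j, 0 ≤ (t j - if j ∈ s then 1 else 0) * (a j - c) := fun j => by
    by_cases hj : j ∈ s
    · simp only [hj, if_true]
      exact mul_nonneg_of_nonpos_of_nonpos (by linarith [ht1 j]) (by linarith [hlow j hj])
    · simp only [hj, if_false, sub_zero]
      exact mul_nonneg (ht0 j) (by linarith [hhigh j hj])
  have hexpand : ∑ j, (t j - if j ∈ s then 1 else 0) * (a j - c)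
      = ∑ j, t j * a j - ∑ j ∈ s, a j - c * (∑ j, t j - #s) := by
    simp only [sub_mul, mul_sub, ite_mul, one_mul, zero_mul, sum_sub_distrib, sum_ite_mem,
      univ_inter, ← sum_mul, sum_const, nsmul_eq_mul]
    ring
  rw [hsum, sub_self, mul_zero, sub_zero] at hexpand
  linarith [sum_nonneg fun j (_ : j ∈ univ) => hterm j]

lemma sum_castLE_le_sum_mul_of_monotone {n k : ℕ} (hk : 1 ≤ k) (hkn : k ≤ n)
    {a t : Fin n → ℝ} (ha : Monotone a) (ht0 : ∀ j, 0 ≤ t j) (ht1 : ∀ j, t j ≤ 1)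
    (hsum : ∑ j, t j = k) :
    ∑ i : Fin k, a (Fin.castLE hkn i) ≤ ∑ j, t j * a j := by
  set s := univ.map (Fin.castLEEmb hkn)
  have hs (j : Fin n) : j ∈ s ↔ (j : ℕ) < k := by
    refine ⟨fun hj => ?_, fun hj => mem_map.2 ⟨⟨j, hj⟩, mem_univ _, rfl⟩⟩
    obtain ⟨i, -, rfl⟩ := mem_map.1 hj
    exact i.2
  let m : Fin n := ⟨k - 1, by omega⟩
  have hcard : #s = k := by rw [card_map, card_univ, Fintype.card_fin]
  calc ∑ i : Fin k, a (Fin.castLE hkn i) = ∑ j ∈ s, a j :=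
        (sum_map univ (Fin.castLEEmb hkn) a).symm
    _ ≤ ∑ j, t j * a j := by
        refine sum_le_sum_mul_of_threshold s (a m) ht0 ht1 (by rw [hsum, hcard])
          (fun j hj => ha ?_) (fun j hj => ha ?_) <;>
        · rw [hs] at hj
          simp only [Fin.le_def, m]
          omega

theorem stmt_12 {n : ℕ} (S : Matrix (Fin n) (Fin n) ℝ) (hS : S.PosDef)
    (lam : Fin n → ℝ) (e : Fin n → Fin n → ℝ)
    (heig : ∀ i, S *ᵥ e i = lam i • e i)
    (horthe : ∀ i j, e i ⬝ᵥ e j = if i = j then (1 : ℝ) else 0)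
    (hord : ∀ i j : Fin n, i ≤ j → ell (lam i) ≤ ell (lam j))
    (k : ℕ) (hk1 : 1 ≤ k) (hkn : k ≤ n)
    (d : Fin k → Fin n → ℝ)
    (horthd : ∀ i j, d i ⬝ᵥ d j = if i = j then (1 : ℝ) else 0) :
    ∑ i : Fin k, ell (lam (Fin.castLE hkn i)) ≤ ∑ i : Fin k, ell (d i ⬝ᵥ S *ᵥ d i) := by
  set c : Fin k → Fin n → ℝ := fun i j => (e j ⬝ᵥ d i) ^ 2
  have hrow (i : Fin k) : ∑ j, c i j = 1 := by
    rw [← dotProduct_self_eq_sum_sq_of_orthonormal horthe, horthd, if_pos rfl]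
  have hcol (j : Fin n) : ∑ i, c i j ≤ 1 := by
    simpa only [c, dotProduct_comm (e j), horthe, if_true]
      using sum_sq_dotProduct_le_of_orthonormal horthd (e j)
  have hlam (j : Fin n) : 0 < lam j :=
    hS.pos_of_mulVec_eq_smul (fun h => by simpa [h] using horthe j j) (heig j)
  calc ∑ i : Fin k, ell (lam (Fin.castLE hkn i))
      ≤ ∑ j, (∑ i, c i j) * ell (lam j) := by
        refine sum_castLE_le_sum_mul_of_monotone hk1 hkn (fun i j => hord i j)
          (fun j => sum_nonneg fun i _ => sq_nonneg _) hcol ?_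
        rw [sum_comm]
        simp [hrow]
    _ = ∑ i, ∑ j, c i j * ell (lam j) := by simp only [sum_mul]; exact sum_comm
    _ ≤ ∑ i, ell (∑ j, c i j * lam j) := sum_le_sum fun i _ => by
        simpa only [smul_eq_mul] using ell_concaveOn.le_map_sum (t := univ)
          (fun j _ => sq_nonneg _) (hrow i) (fun j _ => hlam j)
    _ = ∑ i : Fin k, ell (d i ⬝ᵥ S *ᵥ d i) := by
        simp only [dotProduct_mulVec_eq_sum_of_eigenbasis heig horthe, c]
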